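/- Let ν > 0, κ > 0. Let u, v be admissible vector fields and θ, η admissible scalar functions; set U = u−v, Θ = θ−η. Assume c₁ > 0 is a constant such that |U|²_{L⁴} ≤ c₁ |U| ‖U‖ and |Θ|²_{L⁴} ≤ c₁ |Θ| ‖Θ‖. Then there is a constant c > 0 depending only on c₁ such that −ν‖U‖² − κ‖Θ‖² − ⟨B₁(U,U),v⟩ − ⟨B₂(U,Θ),η⟩ + 2∫_D U₂ Θ dx + min(ν,κ)(‖U‖² + ‖Θ‖²) ≤ c (|U|² + |Θ|²)^{1/2} (‖U‖² + ‖Θ‖²)^{1/2} (‖v‖² + ‖η‖²)^{1/2} + (|U|² + |Θ|²). (The left-hand side equals ⟨F(φ)−F(ψ), φ−ψ⟩ + (ν∧κ)‖φ−ψ‖² where φ = (u,θ), ψ = (v,η) and F(φ) = −Aφ − B(φ) − Rφ is the drift of the Boussinesq system.) -/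

import Mathlib

open MeasureTheory Real

noncomputable section

/-- The rectangular domain `D = (0,l) × (0,1)` in the plane. -/
def domD (l : ℝ) : Set (ℝ × ℝ) := Set.Ioo 0 l ×ˢ Set.Ioo (0:ℝ) 1

/-- Partial derivative in the first variable. -/
def pd1 (f : ℝ × ℝ → ℝ) (x : ℝ × ℝ) : ℝ := fderiv ℝ f x (1, 0)

/-- Partial derivative in the second variable. -/
def pd2 (f : ℝ × ℝ → ℝ) (x : ℝ × ℝ) : ℝ := fderiv ℝ f x (0, 1)

/-- A vector field is admissible if it is `C¹`, periodic in `x₁` with period `l`,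
vanishes on the lines `x₂ = 0` and `x₂ = 1`, and is divergence free. -/
def AdmissibleVec (l : ℝ) (u : ℝ × ℝ → ℝ × ℝ) : Prop :=
  ContDiff ℝ 1 u ∧
  (∀ x₁ x₂ : ℝ, u (x₁ + l, x₂) = u (x₁, x₂)) ∧
  (∀ x₁ : ℝ, u (x₁, 0) = 0) ∧
  (∀ x₁ : ℝ, u (x₁, 1) = 0) ∧
  (∀ x : ℝ × ℝ, pd1 (fun y => (u y).1) x + pd2 (fun y => (u y).2) x = 0)

/-- A scalar function is admissible if it is `C¹` and periodic in `x₁` with period `l`. -/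
def AdmissibleScalar (l : ℝ) (θ : ℝ × ℝ → ℝ) : Prop :=
  ContDiff ℝ 1 θ ∧ (∀ x₁ x₂ : ℝ, θ (x₁ + l, x₂) = θ (x₁, x₂))

/-- The trilinear form `⟨B₁(u,v),w⟩ = Σ_{i,j} ∫_D u_i (∂_i v_j) w_j dx`. -/
def B1 (l : ℝ) (u v w : ℝ × ℝ → ℝ × ℝ) : ℝ :=
  ∫ x in domD l,
    ((u x).1 * pd1 (fun y => (v y).1) x * (w x).1
      + (u x).1 * pd1 (fun y => (v y).2) x * (w x).2
      + (u x).2 * pd2 (fun y => (v y).1) x * (w x).1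
      + (u x).2 * pd2 (fun y => (v y).2) x * (w x).2)

/-- The trilinear form `⟨B₂(u,θ),η⟩ = Σ_i ∫_D u_i (∂_i θ) η dx`. -/
def B2 (l : ℝ) (u : ℝ × ℝ → ℝ × ℝ) (θ η : ℝ × ℝ → ℝ) : ℝ :=
  ∫ x in domD l, ((u x).1 * pd1 θ x * η x + (u x).2 * pd2 θ x * η x)

/-- `L²(D)` norm of a vector field. -/
def L2normVec (l : ℝ) (u : ℝ × ℝ → ℝ × ℝ) : ℝ :=
  Real.sqrt (∫ x in domD l, ((u x).1 ^ 2 + (u x).2 ^ 2))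

/-- `L²(D)` norm of a scalar function. -/
def L2normScalar (l : ℝ) (f : ℝ × ℝ → ℝ) : ℝ :=
  Real.sqrt (∫ x in domD l, (f x) ^ 2)

/-- `L⁴(D)` norm of a vector field. -/
def L4normVec (l : ℝ) (u : ℝ × ℝ → ℝ × ℝ) : ℝ :=
  (∫ x in domD l, ((u x).1 ^ 2 + (u x).2 ^ 2) ^ 2) ^ ((1:ℝ)/4)

/-- `L⁴(D)` norm of a scalar function. -/
def L4normScalar (l : ℝ) (f : ℝ × ℝ → ℝ) : ℝ :=
  (∫ x in domD l, (f x) ^ 4) ^ ((1:ℝ)/4)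

/-- Gradient (`H¹` seminorm / `V`) norm of a vector field. -/
def H1normVec (l : ℝ) (u : ℝ × ℝ → ℝ × ℝ) : ℝ :=
  Real.sqrt (∫ x in domD l,
    (pd1 (fun y => (u y).1) x ^ 2 + pd2 (fun y => (u y).1) x ^ 2
      + pd1 (fun y => (u y).2) x ^ 2 + pd2 (fun y => (u y).2) x ^ 2))

/-- Gradient (`H¹` seminorm / `V`) norm of a scalar function. -/
def H1normScalar (l : ℝ) (f : ℝ × ℝ → ℝ) : ℝ :=
  Real.sqrt (∫ x in domD l, (pd1 f x ^ 2 + pd2 f x ^ 2))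

lemma cont_pd1 {f : ℝ × ℝ → ℝ} (hf : ContDiff ℝ 1 f) : Continuous (pd1 f) :=
  ((contDiff_one_iff_fderiv.mp hf).2).clm_apply continuous_const

lemma cont_pd2 {f : ℝ × ℝ → ℝ} (hf : ContDiff ℝ 1 f) : Continuous (pd2 f) :=
  ((contDiff_one_iff_fderiv.mp hf).2).clm_apply continuous_const

lemma pd1_mul {f g : ℝ × ℝ → ℝ} (hf : ContDiff ℝ 1 f) (hg : ContDiff ℝ 1 g) (x : ℝ × ℝ) :
    pd1 (fun y => f y * g y) x = pd1 f x * g x + f x * pd1 g x := by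
  unfold pd1
  rw [fderiv_fun_mul (hf.differentiable one_ne_zero x) (hg.differentiable one_ne_zero x)]
  simp [smul_eq_mul]; ring

lemma pd2_mul {f g : ℝ × ℝ → ℝ} (hf : ContDiff ℝ 1 f) (hg : ContDiff ℝ 1 g) (x : ℝ × ℝ) :
    pd2 (fun y => f y * g y) x = pd2 f x * g x + f x * pd2 g x := by
  unfold pd2
  rw [fderiv_fun_mul (hf.differentiable one_ne_zero x) (hg.differentiable one_ne_zero x)]
  simp [smul_eq_mul]; ring

lemma domD_ae_Icc (l : ℝ) :
    (domD l : Set (ℝ × ℝ)) =ᵐ[volume] Set.Icc ((0:ℝ),(0:ℝ)) (l,1) := by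
  rw [Set.Icc_prod_eq, Measure.volume_eq_prod]
  exact Measure.set_prod_ae_eq Ioo_ae_eq_Icc Ioo_ae_eq_Icc

lemma divInt_zero {l : ℝ} (hl : 0 < l) {G : ℝ × ℝ → ℝ × ℝ} (hG : ContDiff ℝ 1 G)
    (hper : ∀ x₁ x₂ : ℝ, G (x₁ + l, x₂) = G (x₁, x₂))
    (h0 : ∀ x₁ : ℝ, (G (x₁, (0:ℝ))).2 = 0) (h1 : ∀ x₁ : ℝ, (G (x₁, (1:ℝ))).2 = 0) :
    ∫ x in domD l, (pd1 (fun y => (G y).1) x + pd2 (fun y => (G y).2) x) = 0 := by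
  have hG1 : ContDiff ℝ 1 (fun y => (G y).1) := contDiff_fst.comp hG
  have hG2 : ContDiff ℝ 1 (fun y => (G y).2) := contDiff_snd.comp hG
  have hle : ((0:ℝ),(0:ℝ)) ≤ ((l:ℝ),(1:ℝ)) := ⟨hl.le, zero_le_one⟩
  have hcont : Continuous fun x => pd1 (fun y => (G y).1) x + pd2 (fun y => (G y).2) x :=
    (cont_pd1 hG1).add (cont_pd2 hG2)
  have key := integral_divergence_prod_Icc_of_hasFDerivAt_off_countable_of_le
    (fun y => (G y).1) (fun y => (G y).2)
    (fun x => fderiv ℝ (fun y => (G y).1) x) (fun x => fderiv ℝ (fun y => (G y).2) x)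
    ((0:ℝ),(0:ℝ)) ((l:ℝ),(1:ℝ)) hle ∅ Set.countable_empty
    (hG1.continuous.continuousOn) (hG2.continuous.continuousOn)
    (fun x _ => (hG1.differentiable one_ne_zero x).hasFDerivAt)
    (fun x _ => (hG2.differentiable one_ne_zero x).hasFDerivAt)
    (hcont.continuousOn.integrableOn_compact isCompact_Icc)
  rw [setIntegral_congr_set (domD_ae_Icc l)]
  rw [show (∫ x in Set.Icc ((0:ℝ),(0:ℝ)) (l,1),
      (pd1 (fun y => (G y).1) x + pd2 (fun y => (G y).2) x)) =
      ∫ x in Set.Icc ((0:ℝ),(0:ℝ)) (l,1),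
      (fderiv ℝ (fun y => (G y).1) x (1,0) + fderiv ℝ (fun y => (G y).2) x (0,1)) from rfl]
  rw [key]
  have b1 : (∫ x in (0:ℝ)..l, (G (x, (1:ℝ))).2) = 0 := by simp [h1]
  have b2 : (∫ x in (0:ℝ)..l, (G (x, (0:ℝ))).2) = 0 := by simp [h0]
  have b3 : (∫ y in (0:ℝ)..1, (G ((l:ℝ), y)).1) = ∫ y in (0:ℝ)..1, (G ((0:ℝ), y)).1 := by
    apply intervalIntegral.integral_congr
    intro y _
    have := hper 0 y
    rw [zero_add] at this
    simp only [this]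
  simp only [b1, b2, b3]
  ring

lemma intD {l : ℝ} {f : ℝ × ℝ → ℝ} (hf : Continuous f) : IntegrableOn f (domD l) := by
  have h : IntegrableOn f (Set.Icc 0 l ×ˢ Set.Icc (0:ℝ) 1) := by
    apply hf.continuousOn.integrableOn_compact
    exact (isCompact_Icc.prod isCompact_Icc)
  exact h.mono_set (Set.prod_mono Set.Ioo_subset_Icc_self Set.Ioo_subset_Icc_self)

lemma pd1_add {f g : ℝ × ℝ → ℝ} (hf : ContDiff ℝ 1 f) (hg : ContDiff ℝ 1 g) (x : ℝ × ℝ) :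
    pd1 (fun y => f y + g y) x = pd1 f x + pd1 g x := by
  unfold pd1
  rw [fderiv_fun_add (hf.differentiable one_ne_zero x) (hg.differentiable one_ne_zero x)]
  simp

lemma pd2_add {f g : ℝ × ℝ → ℝ} (hf : ContDiff ℝ 1 f) (hg : ContDiff ℝ 1 g) (x : ℝ × ℝ) :
    pd2 (fun y => f y + g y) x = pd2 f x + pd2 g x := by
  unfold pd2
  rw [fderiv_fun_add (hf.differentiable one_ne_zero x) (hg.differentiable one_ne_zero x)]
  simp

lemma ibp2 {l : ℝ} (hl : 0 < l) {U : ℝ × ℝ → ℝ × ℝ} {θ η : ℝ × ℝ → ℝ}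
    (hU : ContDiff ℝ 1 U) (hUper : ∀ x₁ x₂ : ℝ, U (x₁ + l, x₂) = U (x₁, x₂))
    (hU0 : ∀ x₁ : ℝ, U (x₁, 0) = 0) (hU1 : ∀ x₁ : ℝ, U (x₁, 1) = 0)
    (hdiv : ∀ x : ℝ × ℝ, pd1 (fun y => (U y).1) x + pd2 (fun y => (U y).2) x = 0)
    (hθ : ContDiff ℝ 1 θ) (hθper : ∀ x₁ x₂ : ℝ, θ (x₁ + l, x₂) = θ (x₁, x₂))
    (hη : ContDiff ℝ 1 η) (hηper : ∀ x₁ x₂ : ℝ, η (x₁ + l, x₂) = η (x₁, x₂)) :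
    B2 l U θ η + B2 l U η θ = 0 := by
  have hU1c : ContDiff ℝ 1 (fun y => (U y).1) := contDiff_fst.comp hU
  have hU2c : ContDiff ℝ 1 (fun y => (U y).2) := contDiff_snd.comp hU
  set S : ℝ × ℝ → ℝ := fun y => θ y * η y with hS
  have hSc : ContDiff ℝ 1 S := hθ.mul hη
  set G : ℝ × ℝ → ℝ × ℝ := fun y => ((U y).1 * S y, (U y).2 * S y) with hG
  have hGc : ContDiff ℝ 1 G := ((hU1c.mul hSc).prodMk (hU2c.mul hSc))
  have hGper : ∀ x₁ x₂ : ℝ, G (x₁ + l, x₂) = G (x₁, x₂) := by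
    intro x₁ x₂
    simp only [hG, hS, hUper, hθper, hηper]
  have hG0 : ∀ x₁ : ℝ, (G (x₁, (0:ℝ))).2 = 0 := by
    intro x₁; simp only [hG]; rw [show (U (x₁, (0:ℝ))).2 = 0 by rw [hU0]; rfl]; ring
  have hG1 : ∀ x₁ : ℝ, (G (x₁, (1:ℝ))).2 = 0 := by
    intro x₁; simp only [hG]; rw [show (U (x₁, (1:ℝ))).2 = 0 by rw [hU1]; rfl]; ring
  have hzero := divInt_zero hl hGc hGper hG0 hG1
  have hpt : ∀ x : ℝ × ℝ,
      pd1 (fun y => (G y).1) x + pd2 (fun y => (G y).2) x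
        = ((U x).1 * pd1 θ x * η x + (U x).2 * pd2 θ x * η x)
          + ((U x).1 * pd1 η x * θ x + (U x).2 * pd2 η x * θ x) := by
    intro x
    have e1 : pd1 (fun y => (G y).1) x = pd1 (fun y => (U y).1) x * S x + (U x).1 * pd1 S x :=
      pd1_mul hU1c hSc x
    have e2 : pd2 (fun y => (G y).2) x = pd2 (fun y => (U y).2) x * S x + (U x).2 * pd2 S x :=
      pd2_mul hU2c hSc x
    have eS1 : pd1 S x = pd1 θ x * η x + θ x * pd1 η x := pd1_mul hθ hη x
    have eS2 : pd2 S x = pd2 θ x * η x + θ x * pd2 η x := pd2_mul hθ hη x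
    rw [e1, e2, eS1, eS2]
    simp only [hS]
    linear_combination (θ x * η x) * hdiv x
  have i1 : IntegrableOn (fun x => (U x).1 * pd1 θ x * η x + (U x).2 * pd2 θ x * η x) (domD l) := by
    apply intD
    exact (((hU1c.continuous.mul (cont_pd1 hθ)).mul hη.continuous).add
      ((hU2c.continuous.mul (cont_pd2 hθ)).mul hη.continuous))
  have i2 : IntegrableOn (fun x => (U x).1 * pd1 η x * θ x + (U x).2 * pd2 η x * θ x) (domD l) := by
    apply intD
    exact (((hU1c.continuous.mul (cont_pd1 hη)).mul hθ.continuous).add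
      ((hU2c.continuous.mul (cont_pd2 hη)).mul hθ.continuous))
  have : B2 l U θ η + B2 l U η θ
      = ∫ x in domD l, (((U x).1 * pd1 θ x * η x + (U x).2 * pd2 θ x * η x)
          + ((U x).1 * pd1 η x * θ x + (U x).2 * pd2 η x * θ x)) := by
    rw [B2, B2, ← integral_add i1 i2]
  rw [this, ← hzero]
  exact setIntegral_congr_fun (measurableSet_Ioo.prod measurableSet_Ioo) (fun x _ => (hpt x).symm)

lemma ibp1 {l : ℝ} (hl : 0 < l) {U v : ℝ × ℝ → ℝ × ℝ}
    (hU : ContDiff ℝ 1 U) (hUper : ∀ x₁ x₂ : ℝ, U (x₁ + l, x₂) = U (x₁, x₂))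
    (hU0 : ∀ x₁ : ℝ, U (x₁, 0) = 0) (hU1 : ∀ x₁ : ℝ, U (x₁, 1) = 0)
    (hdiv : ∀ x : ℝ × ℝ, pd1 (fun y => (U y).1) x + pd2 (fun y => (U y).2) x = 0)
    (hv : ContDiff ℝ 1 v) (hvper : ∀ x₁ x₂ : ℝ, v (x₁ + l, x₂) = v (x₁, x₂)) :
    B1 l U U v + B1 l U v U = 0 := by
  have hU1c : ContDiff ℝ 1 (fun y => (U y).1) := contDiff_fst.comp hU
  have hU2c : ContDiff ℝ 1 (fun y => (U y).2) := contDiff_snd.comp hU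
  have hv1c : ContDiff ℝ 1 (fun y => (v y).1) := contDiff_fst.comp hv
  have hv2c : ContDiff ℝ 1 (fun y => (v y).2) := contDiff_snd.comp hv
  set S : ℝ × ℝ → ℝ := fun y => (U y).1 * (v y).1 + (U y).2 * (v y).2 with hS
  have hSc : ContDiff ℝ 1 S := (hU1c.mul hv1c).add (hU2c.mul hv2c)
  set G : ℝ × ℝ → ℝ × ℝ := fun y => ((U y).1 * S y, (U y).2 * S y) with hG
  have hGc : ContDiff ℝ 1 G := ((hU1c.mul hSc).prodMk (hU2c.mul hSc))
  have hGper : ∀ x₁ x₂ : ℝ, G (x₁ + l, x₂) = G (x₁, x₂) := by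
    intro x₁ x₂
    simp only [hG, hS, hUper, hvper]
  have hG0 : ∀ x₁ : ℝ, (G (x₁, (0:ℝ))).2 = 0 := by
    intro x₁; simp only [hG]; rw [show (U (x₁, (0:ℝ))).2 = 0 by rw [hU0]; rfl]; ring
  have hG1 : ∀ x₁ : ℝ, (G (x₁, (1:ℝ))).2 = 0 := by
    intro x₁; simp only [hG]; rw [show (U (x₁, (1:ℝ))).2 = 0 by rw [hU1]; rfl]; ring
  have hzero := divInt_zero hl hGc hGper hG0 hG1
  have hpt : ∀ x : ℝ × ℝ,
      pd1 (fun y => (G y).1) x + pd2 (fun y => (G y).2) x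
        = ((U x).1 * pd1 (fun y => (U y).1) x * (v x).1
            + (U x).1 * pd1 (fun y => (U y).2) x * (v x).2
            + (U x).2 * pd2 (fun y => (U y).1) x * (v x).1
            + (U x).2 * pd2 (fun y => (U y).2) x * (v x).2)
          + ((U x).1 * pd1 (fun y => (v y).1) x * (U x).1
            + (U x).1 * pd1 (fun y => (v y).2) x * (U x).2
            + (U x).2 * pd2 (fun y => (v y).1) x * (U x).1
            + (U x).2 * pd2 (fun y => (v y).2) x * (U x).2) := by
    intro x
    have e1 : pd1 (fun y => (G y).1) x = pd1 (fun y => (U y).1) x * S x + (U x).1 * pd1 S x :=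
      pd1_mul hU1c hSc x
    have e2 : pd2 (fun y => (G y).2) x = pd2 (fun y => (U y).2) x * S x + (U x).2 * pd2 S x :=
      pd2_mul hU2c hSc x
    have eS1 : pd1 S x = (pd1 (fun y => (U y).1) x * (v x).1 + (U x).1 * pd1 (fun y => (v y).1) x)
        + (pd1 (fun y => (U y).2) x * (v x).2 + (U x).2 * pd1 (fun y => (v y).2) x) := by
      rw [show pd1 S x = pd1 (fun y => (U y).1 * (v y).1) x + pd1 (fun y => (U y).2 * (v y).2) x
        from pd1_add (hU1c.mul hv1c) (hU2c.mul hv2c) x,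
        pd1_mul hU1c hv1c x, pd1_mul hU2c hv2c x]
    have eS2 : pd2 S x = (pd2 (fun y => (U y).1) x * (v x).1 + (U x).1 * pd2 (fun y => (v y).1) x)
        + (pd2 (fun y => (U y).2) x * (v x).2 + (U x).2 * pd2 (fun y => (v y).2) x) := by
      rw [show pd2 S x = pd2 (fun y => (U y).1 * (v y).1) x + pd2 (fun y => (U y).2 * (v y).2) x
        from pd2_add (hU1c.mul hv1c) (hU2c.mul hv2c) x,
        pd2_mul hU1c hv1c x, pd2_mul hU2c hv2c x]
    rw [e1, e2, eS1, eS2]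
    simp only [hS]
    linear_combination ((U x).1 * (v x).1 + (U x).2 * (v x).2) * hdiv x
  have i1 : IntegrableOn (fun x => (U x).1 * pd1 (fun y => (U y).1) x * (v x).1
      + (U x).1 * pd1 (fun y => (U y).2) x * (v x).2
      + (U x).2 * pd2 (fun y => (U y).1) x * (v x).1
      + (U x).2 * pd2 (fun y => (U y).2) x * (v x).2) (domD l) := by
    apply intD
    exact ((((hU1c.continuous.mul (cont_pd1 hU1c)).mul hv1c.continuous).add
      ((hU1c.continuous.mul (cont_pd1 hU2c)).mul hv2c.continuous)).add
      ((hU2c.continuous.mul (cont_pd2 hU1c)).mul hv1c.continuous)).add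
      ((hU2c.continuous.mul (cont_pd2 hU2c)).mul hv2c.continuous)
  have i2 : IntegrableOn (fun x => (U x).1 * pd1 (fun y => (v y).1) x * (U x).1
      + (U x).1 * pd1 (fun y => (v y).2) x * (U x).2
      + (U x).2 * pd2 (fun y => (v y).1) x * (U x).1
      + (U x).2 * pd2 (fun y => (v y).2) x * (U x).2) (domD l) := by
    apply intD
    exact ((((hU1c.continuous.mul (cont_pd1 hv1c)).mul hU1c.continuous).add
      ((hU1c.continuous.mul (cont_pd1 hv2c)).mul hU2c.continuous)).add
      ((hU2c.continuous.mul (cont_pd2 hv1c)).mul hU1c.continuous)).add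
      ((hU2c.continuous.mul (cont_pd2 hv2c)).mul hU2c.continuous)
  have : B1 l U U v + B1 l U v U
      = ∫ x in domD l, (((U x).1 * pd1 (fun y => (U y).1) x * (v x).1
            + (U x).1 * pd1 (fun y => (U y).2) x * (v x).2
            + (U x).2 * pd2 (fun y => (U y).1) x * (v x).1
            + (U x).2 * pd2 (fun y => (U y).2) x * (v x).2)
          + ((U x).1 * pd1 (fun y => (v y).1) x * (U x).1
            + (U x).1 * pd1 (fun y => (v y).2) x * (U x).2
            + (U x).2 * pd2 (fun y => (v y).1) x * (U x).1
            + (U x).2 * pd2 (fun y => (v y).2) x * (U x).2)) := by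
    rw [B1, B1, ← integral_add i1 i2]
  rw [this, ← hzero]
  exact setIntegral_congr_fun (measurableSet_Ioo.prod measurableSet_Ioo) (fun x _ => (hpt x).symm)

lemma csD {s : Set (ℝ × ℝ)} {f g : ℝ × ℝ → ℝ}
    (hf2 : IntegrableOn (fun x => f x ^ 2) s) (hg2 : IntegrableOn (fun x => g x ^ 2) s)
    (hfg : IntegrableOn (fun x => f x * g x) s) :
    ∫ x in s, f x * g x ≤ Real.sqrt (∫ x in s, f x ^ 2) * Real.sqrt (∫ x in s, g x ^ 2) := by
  set A := ∫ x in s, f x ^ 2 with hA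
  set B := ∫ x in s, g x ^ 2 with hB
  set C := ∫ x in s, f x * g x with hC
  have hA0 : 0 ≤ A := integral_nonneg (fun x => sq_nonneg _)
  have hB0 : 0 ≤ B := integral_nonneg (fun x => sq_nonneg _)
  have key : ∀ t : ℝ, 0 ≤ A * (t * t) + (-2 * C) * t + B := by
    intro t
    have h1 : 0 ≤ ∫ x in s, (t * f x - g x) ^ 2 :=
      integral_nonneg (fun x => sq_nonneg _)
    have h2 : (∫ x in s, (t * f x - g x) ^ 2) = A * (t * t) + (-2 * C) * t + B := by
      have : (fun x => (t * f x - g x) ^ 2)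
          = fun x => (t * t) * f x ^ 2 + (-2 * t) * (f x * g x) + g x ^ 2 := by
        funext x; ring
      rw [this]
      have i1 : IntegrableOn (fun x => t * t * f x ^ 2) s := hf2.const_mul _
      have i2 : IntegrableOn (fun x => -2 * t * (f x * g x)) s := hfg.const_mul _
      have e1 : ∫ x in s, (t * t * f x ^ 2 + -2 * t * (f x * g x) + g x ^ 2)
          = (∫ x in s, (t * t * f x ^ 2 + -2 * t * (f x * g x))) + ∫ x in s, g x ^ 2 :=
        integral_add (i1.add i2) hg2
      have e2 : ∫ x in s, (t * t * f x ^ 2 + -2 * t * (f x * g x))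
          = (∫ x in s, t * t * f x ^ 2) + ∫ x in s, -2 * t * (f x * g x) :=
        integral_add i1 i2
      rw [e1, e2, integral_const_mul, integral_const_mul]
      ring
    linarith [h2 ▸ h1]
  have hd := discrim_le_zero key
  rw [discrim] at hd
  have hC2 : C ^ 2 ≤ A * B := by nlinarith
  calc C ≤ |C| := le_abs_self C
    _ = Real.sqrt (C ^ 2) := (Real.sqrt_sq_eq_abs C).symm
    _ ≤ Real.sqrt (A * B) := Real.sqrt_le_sqrt hC2
    _ = Real.sqrt A * Real.sqrt B := Real.sqrt_mul hA0 B

lemma rpow_quarter_sq {I : ℝ} (hI : 0 ≤ I) : (I ^ ((1:ℝ)/4)) ^ 2 = Real.sqrt I := by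
  rw [← Real.rpow_natCast (I ^ ((1:ℝ)/4)) 2, ← Real.rpow_mul hI, Real.sqrt_eq_rpow]
  norm_num

lemma sqrt_sqrt_mul_sqrt {x y : ℝ} (hx : 0 ≤ x) (hy : 0 ≤ y) :
    Real.sqrt (Real.sqrt x * Real.sqrt y) = x ^ ((1:ℝ)/4) * y ^ ((1:ℝ)/4) := by
  have h : ∀ z : ℝ, 0 ≤ z → Real.sqrt (Real.sqrt z) = z ^ ((1:ℝ)/4) := by
    intro z hz
    rw [Real.sqrt_eq_rpow, Real.sqrt_eq_rpow, ← Real.rpow_mul hz]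
    norm_num
  rw [Real.sqrt_mul (Real.sqrt_nonneg x), h x hx, h y hy]

lemma est1 {l : ℝ} {U v : ℝ × ℝ → ℝ × ℝ} (hU : ContDiff ℝ 1 U) (hv : ContDiff ℝ 1 v) :
    B1 l U v U ≤ (L4normVec l U) ^ 2 * H1normVec l v := by
  have hU1c : Continuous (fun y => (U y).1) := (contDiff_fst.comp hU).continuous
  have hU2c : Continuous (fun y => (U y).2) := (contDiff_snd.comp hU).continuous
  have hv1c : ContDiff ℝ 1 (fun y => (v y).1) := contDiff_fst.comp hv
  have hv2c : ContDiff ℝ 1 (fun y => (v y).2) := contDiff_snd.comp hv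
  set f : ℝ × ℝ → ℝ := fun x => (U x).1 ^ 2 + (U x).2 ^ 2 with hf
  set g : ℝ × ℝ → ℝ := fun x => Real.sqrt (pd1 (fun y => (v y).1) x ^ 2
      + pd2 (fun y => (v y).1) x ^ 2 + pd1 (fun y => (v y).2) x ^ 2
      + pd2 (fun y => (v y).2) x ^ 2) with hg
  have hfc : Continuous f := (hU1c.pow 2).add (hU2c.pow 2)
  have hgc : Continuous g := Real.continuous_sqrt.comp
    ((((cont_pd1 hv1c).pow 2).add ((cont_pd2 hv1c).pow 2)).add
      ((cont_pd1 hv2c).pow 2) |>.add ((cont_pd2 hv2c).pow 2))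
  have hpt : ∀ x ∈ domD l, ((U x).1 * pd1 (fun y => (v y).1) x * (U x).1
      + (U x).1 * pd1 (fun y => (v y).2) x * (U x).2
      + (U x).2 * pd2 (fun y => (v y).1) x * (U x).1
      + (U x).2 * pd2 (fun y => (v y).2) x * (U x).2) ≤ f x * g x := by
    intro x _
    set a := (U x).1; set b := (U x).2
    set p1 := pd1 (fun y => (v y).1) x; set p2 := pd1 (fun y => (v y).2) x
    set p3 := pd2 (fun y => (v y).1) x; set p4 := pd2 (fun y => (v y).2) x
    have hS0 : (0:ℝ) ≤ p1 ^ 2 + p3 ^ 2 + p2 ^ 2 + p4 ^ 2 := by positivity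
    have hg0 : 0 ≤ g x := Real.sqrt_nonneg _
    have hgsq : g x ^ 2 = p1 ^ 2 + p3 ^ 2 + p2 ^ 2 + p4 ^ 2 := Real.sq_sqrt hS0
    have hfx : f x = a ^ 2 + b ^ 2 := rfl
    have hf0 : 0 ≤ f x := by rw [hfx]; positivity
    have hT2 : (a * p1 * a + a * p2 * b + b * p3 * a + b * p4 * b) ^ 2
        ≤ (f x * g x) ^ 2 := by
      rw [mul_pow, hgsq, hfx]
      nlinarith [sq_nonneg (a*a*p2 - a*b*p1), sq_nonneg (a*a*p3 - a*b*p1),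
        sq_nonneg (a*a*p4 - b*b*p1), sq_nonneg (a*b*p3 - a*b*p2),
        sq_nonneg (a*b*p4 - b*b*p2), sq_nonneg (a*b*p4 - b*b*p3),
        sq_nonneg (a*a*p4 - a*b*p2), sq_nonneg (a*a*p4 - a*b*p3),
        sq_nonneg (a*b*p2 - b*b*p1), sq_nonneg (a*b*p3 - b*b*p1)]
    calc a * p1 * a + a * p2 * b + b * p3 * a + b * p4 * b
        ≤ |a * p1 * a + a * p2 * b + b * p3 * a + b * p4 * b| := le_abs_self _
      _ = Real.sqrt ((a * p1 * a + a * p2 * b + b * p3 * a + b * p4 * b) ^ 2) :=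
        (Real.sqrt_sq_eq_abs _).symm
      _ ≤ Real.sqrt ((f x * g x) ^ 2) := Real.sqrt_le_sqrt hT2
      _ = f x * g x := Real.sqrt_sq (mul_nonneg hf0 hg0)
  have hmono : B1 l U v U ≤ ∫ x in domD l, f x * g x := by
    apply setIntegral_mono_on _ (intD (hfc.mul hgc))
      (measurableSet_Ioo.prod measurableSet_Ioo) hpt
    exact intD (((((hU1c.mul (cont_pd1 hv1c)).mul hU1c).add
      ((hU1c.mul (cont_pd1 hv2c)).mul hU2c)).add
      ((hU2c.mul (cont_pd2 hv1c)).mul hU1c)).add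
      ((hU2c.mul (cont_pd2 hv2c)).mul hU2c))
  have hcs : ∫ x in domD l, f x * g x
      ≤ Real.sqrt (∫ x in domD l, f x ^ 2) * Real.sqrt (∫ x in domD l, g x ^ 2) :=
    csD (intD (hfc.pow 2)) (intD (hgc.pow 2)) (intD (hfc.mul hgc))
  have hI40 : 0 ≤ ∫ x in domD l, ((U x).1 ^ 2 + (U x).2 ^ 2) ^ 2 :=
    integral_nonneg (fun x => sq_nonneg _)
  have e4 : Real.sqrt (∫ x in domD l, f x ^ 2) = (L4normVec l U) ^ 2 := by
    rw [L4normVec, rpow_quarter_sq hI40]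
  have eH : Real.sqrt (∫ x in domD l, g x ^ 2) = H1normVec l v := by
    rw [H1normVec]
    congr 1
    apply setIntegral_congr_fun (measurableSet_Ioo.prod measurableSet_Ioo)
    intro x _
    simp only [hg]
    rw [Real.sq_sqrt (by positivity)]
  calc B1 l U v U ≤ ∫ x in domD l, f x * g x := hmono
    _ ≤ Real.sqrt (∫ x in domD l, f x ^ 2) * Real.sqrt (∫ x in domD l, g x ^ 2) := hcs
    _ = (L4normVec l U) ^ 2 * H1normVec l v := by rw [e4, eH]

lemma est2 {l : ℝ} {U : ℝ × ℝ → ℝ × ℝ} {η Θ : ℝ × ℝ → ℝ}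
    (hU : ContDiff ℝ 1 U) (hη : ContDiff ℝ 1 η) (hΘ : Continuous Θ) :
    B2 l U η Θ ≤ L4normVec l U * L4normScalar l Θ * H1normScalar l η := by
  have hU1c : Continuous (fun y => (U y).1) := (contDiff_fst.comp hU).continuous
  have hU2c : Continuous (fun y => (U y).2) := (contDiff_snd.comp hU).continuous
  set f : ℝ × ℝ → ℝ := fun x => Real.sqrt ((U x).1 ^ 2 + (U x).2 ^ 2) * |Θ x| with hf
  set g : ℝ × ℝ → ℝ := fun x => Real.sqrt (pd1 η x ^ 2 + pd2 η x ^ 2) with hg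
  have hfc : Continuous f :=
    (Real.continuous_sqrt.comp ((hU1c.pow 2).add (hU2c.pow 2))).mul hΘ.abs
  have hgc : Continuous g :=
    Real.continuous_sqrt.comp (((cont_pd1 hη).pow 2).add ((cont_pd2 hη).pow 2))
  have hf2 : ∀ x : ℝ × ℝ, f x ^ 2 = ((U x).1 ^ 2 + (U x).2 ^ 2) * Θ x ^ 2 := by
    intro x
    simp only [hf]
    rw [mul_pow, Real.sq_sqrt (by positivity), sq_abs]
  have hpt : ∀ x ∈ domD l,
      ((U x).1 * pd1 η x * Θ x + (U x).2 * pd2 η x * Θ x) ≤ f x * g x := by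
    intro x _
    set a := (U x).1; set b := (U x).2; set t := Θ x
    set q1 := pd1 η x; set q2 := pd2 η x
    have hf0 : 0 ≤ f x := mul_nonneg (Real.sqrt_nonneg _) (abs_nonneg _)
    have hg0 : 0 ≤ g x := Real.sqrt_nonneg _
    have hgsq : g x ^ 2 = q1 ^ 2 + q2 ^ 2 := Real.sq_sqrt (by positivity)
    have hT2 : (a * q1 * t + b * q2 * t) ^ 2 ≤ (f x * g x) ^ 2 := by
      rw [mul_pow, hgsq, hf2 x]
      nlinarith [sq_nonneg (a * q2 - b * q1), sq_nonneg t]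
    calc a * q1 * t + b * q2 * t ≤ |a * q1 * t + b * q2 * t| := le_abs_self _
      _ = Real.sqrt ((a * q1 * t + b * q2 * t) ^ 2) := (Real.sqrt_sq_eq_abs _).symm
      _ ≤ Real.sqrt ((f x * g x) ^ 2) := Real.sqrt_le_sqrt hT2
      _ = f x * g x := Real.sqrt_sq (mul_nonneg hf0 hg0)
  have hmono : B2 l U η Θ ≤ ∫ x in domD l, f x * g x := by
    apply setIntegral_mono_on _ (intD (hfc.mul hgc))
      (measurableSet_Ioo.prod measurableSet_Ioo) hpt
    exact intD (((hU1c.mul (cont_pd1 hη)).mul hΘ).add ((hU2c.mul (cont_pd2 hη)).mul hΘ))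
  have hcs : ∫ x in domD l, f x * g x
      ≤ Real.sqrt (∫ x in domD l, f x ^ 2) * Real.sqrt (∫ x in domD l, g x ^ 2) :=
    csD (intD (hfc.pow 2)) (intD (hgc.pow 2)) (intD (hfc.mul hgc))
  have eH : Real.sqrt (∫ x in domD l, g x ^ 2) = H1normScalar l η := by
    rw [H1normScalar]
    congr 1
    apply setIntegral_congr_fun (measurableSet_Ioo.prod measurableSet_Ioo)
    intro x _
    simp only [hg]
    rw [Real.sq_sqrt (by positivity)]
  -- second Cauchy-Schwarz
  have hcs2 : ∫ x in domD l, f x ^ 2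
      ≤ Real.sqrt (∫ x in domD l, ((U x).1 ^ 2 + (U x).2 ^ 2) ^ 2)
        * Real.sqrt (∫ x in domD l, Θ x ^ 4) := by
    have e : ∫ x in domD l, f x ^ 2
        = ∫ x in domD l, ((U x).1 ^ 2 + (U x).2 ^ 2) * Θ x ^ 2 :=
      setIntegral_congr_fun (measurableSet_Ioo.prod measurableSet_Ioo) (fun x _ => hf2 x)
    rw [e]
    have h := csD (s := domD l) (f := fun x => (U x).1 ^ 2 + (U x).2 ^ 2)
      (g := fun x => Θ x ^ 2)
      (intD (((hU1c.pow 2).add (hU2c.pow 2)).pow 2))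
      (intD ((hΘ.pow 2).pow 2))
      (intD (((hU1c.pow 2).add (hU2c.pow 2)).mul (hΘ.pow 2)))
    have e2 : (∫ x in domD l, (Θ x ^ 2) ^ 2) = ∫ x in domD l, Θ x ^ 4 :=
      setIntegral_congr_fun (measurableSet_Ioo.prod measurableSet_Ioo) (fun x _ => by ring)
    rw [e2] at h
    exact h
  have hI4U : 0 ≤ ∫ x in domD l, ((U x).1 ^ 2 + (U x).2 ^ 2) ^ 2 :=
    integral_nonneg (fun x => sq_nonneg _)
  have hI4T : 0 ≤ ∫ x in domD l, Θ x ^ 4 :=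
    integral_nonneg (fun x => by positivity)
  have hL4 : Real.sqrt (∫ x in domD l, f x ^ 2) ≤ L4normVec l U * L4normScalar l Θ := by
    calc Real.sqrt (∫ x in domD l, f x ^ 2)
        ≤ Real.sqrt (Real.sqrt (∫ x in domD l, ((U x).1 ^ 2 + (U x).2 ^ 2) ^ 2)
            * Real.sqrt (∫ x in domD l, Θ x ^ 4)) := Real.sqrt_le_sqrt hcs2
      _ = L4normVec l U * L4normScalar l Θ := sqrt_sqrt_mul_sqrt hI4U hI4T
  have hH0 : 0 ≤ H1normScalar l η := Real.sqrt_nonneg _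
  calc B2 l U η Θ ≤ ∫ x in domD l, f x * g x := hmono
    _ ≤ Real.sqrt (∫ x in domD l, f x ^ 2) * Real.sqrt (∫ x in domD l, g x ^ 2) := hcs
    _ = Real.sqrt (∫ x in domD l, f x ^ 2) * H1normScalar l η := by rw [eH]
    _ ≤ (L4normVec l U * L4normScalar l Θ) * H1normScalar l η :=
        mul_le_mul_of_nonneg_right hL4 hH0

lemma est3 {l : ℝ} {U : ℝ × ℝ → ℝ × ℝ} {Θ : ℝ × ℝ → ℝ}
    (hU : ContDiff ℝ 1 U) (hΘ : Continuous Θ) :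
    (∫ x in domD l, (U x).2 * Θ x) ≤ L2normVec l U * L2normScalar l Θ := by
  have hU1c : Continuous (fun y => (U y).1) := (contDiff_fst.comp hU).continuous
  have hU2c : Continuous (fun y => (U y).2) := (contDiff_snd.comp hU).continuous
  have hcs := csD (s := domD l) (f := fun x => (U x).2) (g := Θ)
    (intD (hU2c.pow 2)) (intD (hΘ.pow 2)) (intD (hU2c.mul hΘ))
  have hm : (∫ x in domD l, (U x).2 ^ 2) ≤ ∫ x in domD l, ((U x).1 ^ 2 + (U x).2 ^ 2) := by
    apply setIntegral_mono_on (intD (hU2c.pow 2)) (intD ((hU1c.pow 2).add (hU2c.pow 2)))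
      (measurableSet_Ioo.prod measurableSet_Ioo)
    intro x _
    show (U x).2 ^ 2 ≤ (U x).1 ^ 2 + (U x).2 ^ 2
    nlinarith [sq_nonneg (U x).1]
  calc (∫ x in domD l, (U x).2 * Θ x)
      ≤ Real.sqrt (∫ x in domD l, (U x).2 ^ 2) * Real.sqrt (∫ x in domD l, Θ x ^ 2) := hcs
    _ ≤ Real.sqrt (∫ x in domD l, ((U x).1 ^ 2 + (U x).2 ^ 2))
        * Real.sqrt (∫ x in domD l, Θ x ^ 2) :=
        mul_le_mul_of_nonneg_right (Real.sqrt_le_sqrt hm) (Real.sqrt_nonneg _)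
    _ = L2normVec l U * L2normScalar l Θ := rfl

lemma pd1_sub {f g : ℝ × ℝ → ℝ} (hf : ContDiff ℝ 1 f) (hg : ContDiff ℝ 1 g) (x : ℝ × ℝ) :
    pd1 (fun y => f y - g y) x = pd1 f x - pd1 g x := by
  unfold pd1
  rw [fderiv_fun_sub (hf.differentiable one_ne_zero x) (hg.differentiable one_ne_zero x)]
  simp

lemma pd2_sub {f g : ℝ × ℝ → ℝ} (hf : ContDiff ℝ 1 f) (hg : ContDiff ℝ 1 g) (x : ℝ × ℝ) :
    pd2 (fun y => f y - g y) x = pd2 f x - pd2 g x := by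
  unfold pd2
  rw [fderiv_fun_sub (hf.differentiable one_ne_zero x) (hg.differentiable one_ne_zero x)]
  simp

lemma cs_pair (a b A B : ℝ) :
    a * A + b * B ≤ Real.sqrt (a ^ 2 + b ^ 2) * Real.sqrt (A ^ 2 + B ^ 2) := by
  calc a * A + b * B ≤ |a * A + b * B| := le_abs_self _
    _ = Real.sqrt ((a * A + b * B) ^ 2) := (Real.sqrt_sq_eq_abs _).symm
    _ ≤ Real.sqrt ((a ^ 2 + b ^ 2) * (A ^ 2 + B ^ 2)) :=
        Real.sqrt_le_sqrt (by nlinarith [sq_nonneg (a * B - b * A)])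
    _ = Real.sqrt (a ^ 2 + b ^ 2) * Real.sqrt (A ^ 2 + B ^ 2) :=
        Real.sqrt_mul (by positivity) _

/-- Monotonicity of `F`: with `U = u − v`, `Θ = θ − η`, `φ = (u,θ)`, `ψ = (v,η)`,
there is a constant `c > 0` depending only on `c₁` such that
`⟨F(φ)−F(ψ), φ−ψ⟩ + (ν∧κ)‖φ−ψ‖² ≤ c |φ−ψ| ‖φ−ψ‖ ‖ψ‖ + |φ−ψ|²`. -/
theorem F_monotone (c₁ : ℝ) (hc₁ : 0 < c₁) :
    ∃ c : ℝ, 0 < c ∧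
      ∀ (ν κ : ℝ), 0 < ν → 0 < κ →
      ∀ (l : ℝ), 0 < l →
      ∀ (u v : ℝ × ℝ → ℝ × ℝ) (θ η : ℝ × ℝ → ℝ),
        AdmissibleVec l u → AdmissibleVec l v →
        AdmissibleScalar l θ → AdmissibleScalar l η →
        (L4normVec l (fun x => u x - v x)) ^ 2
          ≤ c₁ * L2normVec l (fun x => u x - v x) * H1normVec l (fun x => u x - v x) →
        (L4normScalar l (fun x => θ x - η x)) ^ 2
          ≤ c₁ * L2normScalar l (fun x => θ x - η x) * H1normScalar l (fun x => θ x - η x) →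
        - ν * (H1normVec l (fun x => u x - v x)) ^ 2
          - κ * (H1normScalar l (fun x => θ x - η x)) ^ 2
          - B1 l (fun x => u x - v x) (fun x => u x - v x) v
          - B2 l (fun x => u x - v x) (fun x => θ x - η x) η
          + 2 * (∫ x in domD l, (u x - v x).2 * (θ x - η x))
          + min ν κ * ((H1normVec l (fun x => u x - v x)) ^ 2
              + (H1normScalar l (fun x => θ x - η x)) ^ 2)
        ≤ c * Real.sqrt ((L2normVec l (fun x => u x - v x)) ^ 2
              + (L2normScalar l (fun x => θ x - η x)) ^ 2)
            * Real.sqrt ((H1normVec l (fun x => u x - v x)) ^ 2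
              + (H1normScalar l (fun x => θ x - η x)) ^ 2)
            * Real.sqrt ((H1normVec l v) ^ 2 + (H1normScalar l η) ^ 2)
          + ((L2normVec l (fun x => u x - v x)) ^ 2
              + (L2normScalar l (fun x => θ x - η x)) ^ 2) := by
  refine ⟨2 * c₁, by positivity, ?_⟩
  intro ν κ hν hκ l hl u v θ η hu hv hθ hη hL4V hL4S
  obtain ⟨hu1, hu2, hu3, hu4, hu5⟩ := hu
  obtain ⟨hv1, hv2, hv3, hv4, hv5⟩ := hv
  obtain ⟨hθ1, hθ2⟩ := hθ
  obtain ⟨hη1, hη2⟩ := hη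
  -- properties of U = u - v and Θ = θ - η
  have hUc : ContDiff ℝ 1 (fun x => u x - v x) := hu1.sub hv1
  have hΘc : ContDiff ℝ 1 (fun x => θ x - η x) := hθ1.sub hη1
  have hUper : ∀ x₁ x₂ : ℝ, (fun x => u x - v x) (x₁ + l, x₂) = (fun x => u x - v x) (x₁, x₂) := by
    intro x₁ x₂; simp only [hu2, hv2]
  have hΘper : ∀ x₁ x₂ : ℝ, (fun x => θ x - η x) (x₁ + l, x₂) = (fun x => θ x - η x) (x₁, x₂) := by
    intro x₁ x₂; simp only [hθ2, hη2]
  have hU0 : ∀ x₁ : ℝ, (fun x => u x - v x) (x₁, 0) = 0 := by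
    intro x₁; simp only [hu3, hv3, sub_zero]
  have hU1 : ∀ x₁ : ℝ, (fun x => u x - v x) (x₁, 1) = 0 := by
    intro x₁; simp only [hu4, hv4, sub_zero]
  have hdiv : ∀ x : ℝ × ℝ,
      pd1 (fun y => ((fun x => u x - v x) y).1) x
        + pd2 (fun y => ((fun x => u x - v x) y).2) x = 0 := by
    intro x
    have e1 : pd1 (fun y => (u y - v y).1) x
        = pd1 (fun y => (u y).1) x - pd1 (fun y => (v y).1) x := by
      rw [show (fun y => (u y - v y).1) = fun y => (u y).1 - (v y).1 from rfl]
      exact pd1_sub (contDiff_fst.comp hu1) (contDiff_fst.comp hv1) x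
    have e2 : pd2 (fun y => (u y - v y).2) x
        = pd2 (fun y => (u y).2) x - pd2 (fun y => (v y).2) x := by
      rw [show (fun y => (u y - v y).2) = fun y => (u y).2 - (v y).2 from rfl]
      exact pd2_sub (contDiff_snd.comp hu1) (contDiff_snd.comp hv1) x
    have h5u := hu5 x
    have h5v := hv5 x
    simp only [e1, e2]
    linarith
  -- integration by parts identities
  have e1 : B1 l (fun x => u x - v x) (fun x => u x - v x) v
      + B1 l (fun x => u x - v x) v (fun x => u x - v x) = 0 :=
    ibp1 hl hUc hUper hU0 hU1 hdiv hv1 hv2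
  have e2 : B2 l (fun x => u x - v x) (fun x => θ x - η x) η
      + B2 l (fun x => u x - v x) η (fun x => θ x - η x) = 0 :=
    ibp2 hl hUc hUper hU0 hU1 hdiv hΘc hΘper hη1 hη2
  -- estimates
  have k1 : B1 l (fun x => u x - v x) v (fun x => u x - v x)
      ≤ (L4normVec l (fun x => u x - v x)) ^ 2 * H1normVec l v := est1 hUc hv1
  have k2 : B2 l (fun x => u x - v x) η (fun x => θ x - η x)
      ≤ L4normVec l (fun x => u x - v x) * L4normScalar l (fun x => θ x - η x)
        * H1normScalar l η := est2 hUc hη1 hΘc.continuous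
  have k3 : (∫ x in domD l, (u x - v x).2 * (θ x - η x))
      ≤ L2normVec l (fun x => u x - v x) * L2normScalar l (fun x => θ x - η x) :=
    est3 hUc hΘc.continuous
  -- abbreviations
  set X1 := B1 l (fun x => u x - v x) (fun x => u x - v x) v with hX1
  set X2 := B1 l (fun x => u x - v x) v (fun x => u x - v x) with hX2
  set Y1 := B2 l (fun x => u x - v x) (fun x => θ x - η x) η with hY1
  set Y2 := B2 l (fun x => u x - v x) η (fun x => θ x - η x) with hY2
  set I0 := (∫ x in domD l, (u x - v x).2 * (θ x - η x)) with hI0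
  set a := L2normVec l (fun x => u x - v x) with ha
  set b := L2normScalar l (fun x => θ x - η x) with hb
  set A := H1normVec l (fun x => u x - v x) with hA
  set B := H1normScalar l (fun x => θ x - η x) with hB
  set V := H1normVec l v with hV
  set E := H1normScalar l η with hE
  set P := L4normVec l (fun x => u x - v x) with hP
  set Q := L4normScalar l (fun x => θ x - η x) with hQ
  have ha0 : 0 ≤ a := Real.sqrt_nonneg _
  have hb0 : 0 ≤ b := Real.sqrt_nonneg _
  have hA0 : 0 ≤ A := Real.sqrt_nonneg _
  have hB0 : 0 ≤ B := Real.sqrt_nonneg _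
  have hV0 : 0 ≤ V := Real.sqrt_nonneg _
  have hE0 : 0 ≤ E := Real.sqrt_nonneg _
  have hP0 : 0 ≤ P := Real.rpow_nonneg (integral_nonneg (fun x => sq_nonneg _)) _
  have hQ0 : 0 ≤ Q := Real.rpow_nonneg (integral_nonneg (fun x => by positivity)) _
  set M1 := Real.sqrt (a ^ 2 + b ^ 2) with hM1
  set M2 := Real.sqrt (A ^ 2 + B ^ 2) with hM2
  set W := Real.sqrt (V ^ 2 + E ^ 2) with hW
  have hM10 : 0 ≤ M1 := Real.sqrt_nonneg _
  have hM20 : 0 ≤ M2 := Real.sqrt_nonneg _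
  have hW0 : 0 ≤ W := Real.sqrt_nonneg _
  have hcsM : a * A + b * B ≤ M1 * M2 := cs_pair a b A B
  have hVW : V ≤ W := by
    have h := Real.sqrt_le_sqrt (show V ^ 2 ≤ V ^ 2 + E ^ 2 by linarith only [sq_nonneg E])
    rwa [Real.sqrt_sq hV0] at h
  have hEW : E ≤ W := by
    have h := Real.sqrt_le_sqrt (show E ^ 2 ≤ V ^ 2 + E ^ 2 by linarith only [sq_nonneg V])
    rwa [Real.sqrt_sq hE0] at h
  clear_value X1 X2 Y1 Y2 I0 a b A B V E P Q M1 M2 W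
  clear hX1 hX2 hY1 hY2 hI0 ha hb hA hB hV hE hP hQ hM1 hM2 hW
  clear hu1 hu2 hu3 hu4 hu5 hv1 hv2 hv3 hv4 hv5 hθ1 hθ2 hη1 hη2
  clear hUc hΘc hUper hΘper hU0 hU1 hdiv
  clear u v θ η
  -- viscous term
  have hvisc : min ν κ * (A ^ 2 + B ^ 2) ≤ ν * A ^ 2 + κ * B ^ 2 := by
    have h1 := mul_le_mul_of_nonneg_right (min_le_left ν κ) (sq_nonneg A)
    have h2 := mul_le_mul_of_nonneg_right (min_le_right ν κ) (sq_nonneg B)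
    linarith only [h1, h2, mul_add (min ν κ) (A ^ 2) (B ^ 2)]
  -- nonlinear terms
  have hab0 : 0 ≤ a * A + b * B := add_nonneg (mul_nonneg ha0 hA0) (mul_nonneg hb0 hB0)
  have t1 : P ^ 2 * V ≤ c₁ * (a * A + b * B) * V := by
    have h := mul_le_mul_of_nonneg_right hL4V hV0
    linarith only [h, mul_nonneg (mul_nonneg hc₁.le (mul_nonneg hb0 hB0)) hV0]
  have t2 : P * Q * E ≤ c₁ * (a * A + b * B) * E := by
    have hPQ : P * Q ≤ (P ^ 2 + Q ^ 2) / 2 := by nlinarith [sq_nonneg (P - Q), sq_nonneg (P + Q)]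
    have hPQ2 : P * Q ≤ c₁ * (a * A + b * B) := by
      linarith only [hPQ, hL4V, hL4S, mul_nonneg hc₁.le hab0]
    exact mul_le_mul_of_nonneg_right hPQ2 hE0
  have tsum : c₁ * (a * A + b * B) * (V + E) ≤ c₁ * (M1 * M2) * (2 * W) := by
    apply mul_le_mul (mul_le_mul_of_nonneg_left hcsM hc₁.le) (by linarith)
      (add_nonneg hV0 hE0) (mul_nonneg hc₁.le (mul_nonneg hM10 hM20))
  have hM12 : 2 * c₁ * M1 * M2 * W = c₁ * (M1 * M2) * (2 * W) := by ring
  -- conclude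
  have hfin : X2 + Y2 ≤ 2 * c₁ * M1 * M2 * W := by
    rw [hM12]
    calc X2 + Y2
        ≤ P ^ 2 * V + P * Q * E := by linarith only [k1, k2]
      _ ≤ c₁ * (a * A + b * B) * V + c₁ * (a * A + b * B) * E := by linarith only [t1, t2]
      _ = c₁ * (a * A + b * B) * (V + E) := by ring
      _ ≤ c₁ * (M1 * M2) * (2 * W) := tsum
  linarith only [hfin, k3, hvisc, e1, e2, sq_nonneg (a - b)]
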